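/- Fix a real ρ ∈ (0,1) and define φ(ρ) = H(ρ) if ρ ≤ 1/2 and φ(ρ) = 1 if ρ > 1/2. Let s be a real number with s > φ(ρ), and set k_n = ⌊ρ·n⌋. Then the probability that the random 1-CARD-XOR formula ψ(n, k_n, ⌈s·n⌉) is unsatisfiable tends to 1 as n → ∞. -/

import Mathlib

open Finset Filter
open scoped Classical

/-- Probability of event `P` over a uniformly random pair `(A, b)` with `A` an
`m × n` matrix over `ZMod 2` and `b : Fin m → ZMod 2`. -/
noncomputable def xorProb (n m : ℕ)
    (P : Matrix (Fin m) (Fin n) (ZMod 2) × (Fin m → ZMod 2) → Prop) : ℝ :=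
  (Finset.univ.filter P).card /
    Fintype.card (Matrix (Fin m) (Fin n) (ZMod 2) × (Fin m → ZMod 2))

/-- The random 1-CARD-XOR formula `ψ(n,k,m)` is satisfied by the pair `(A, b)`:
there is an assignment of Hamming weight at most `k` solving `A ⬝ x = b`. -/
def cardXorSat (n k m : ℕ)
    (ab : Matrix (Fin m) (Fin n) (ZMod 2) × (Fin m → ZMod 2)) : Prop :=
  ∃ x : Fin n → ZMod 2, hammingNorm x ≤ k ∧ ab.1.mulVec x = ab.2

/-- Probability that `ψ(n,k,m)` is satisfiable. -/
noncomputable def satProb (n k m : ℕ) : ℝ := xorProb n m (cardXorSat n k m)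

/-- Probability that `ψ(n,k,m)` is unsatisfiable. -/
noncomputable def unsatProb (n k m : ℕ) : ℝ := xorProb n m fun ab => ¬ cardXorSat n k m ab

/-- `#F(n,k) = ∑_{w=0}^{k} C(n,w)`, the number of solutions of the at-most-`k`
cardinality constraint on `n` variables. -/
def cardSum (n k : ℕ) : ℕ := ∑ w ∈ Finset.range (k + 1), n.choose w

/-- The binary entropy function (with `H 0 = H 1 = 0` by `logb` junk values). -/
noncomputable def binEnt (μ : ℝ) : ℝ :=
  -μ * Real.logb 2 μ - (1 - μ) * Real.logb 2 (1 - μ)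

-- counting lemma 1
lemma card_weight_le (n k : ℕ) :
    (Finset.univ.filter (fun x : Fin n → ZMod 2 => hammingNorm x ≤ k)).card ≤ cardSum n k := by
  classical
  have hZ : ∀ a : ZMod 2, a ≠ 0 ↔ a = 1 := by decide
  have hinj : Set.InjOn (fun x : Fin n → ZMod 2 => ({i | x i ≠ 0} : Finset (Fin n)))
      ↑(Finset.univ.filter (fun x : Fin n → ZMod 2 => hammingNorm x ≤ k)) := by
    intro x _ y _ h
    funext i
    have : (x i ≠ 0) = (y i ≠ 0) := by
      have := Finset.ext_iff.mp h i
      simpa using this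
    by_cases hx : x i = 0
    · by_cases hy : y i = 0
      · rw [hx, hy]
      · simp [hx, hy] at this
    · by_cases hy : y i = 0
      · simp [hx, hy] at this
      · rw [(hZ _).mp hx, (hZ _).mp hy]
  have hmaps : ∀ x ∈ Finset.univ.filter (fun x : Fin n → ZMod 2 => hammingNorm x ≤ k),
      ({i | x i ≠ 0} : Finset (Fin n)) ∈
        (Finset.range (k+1)).biUnion (fun w => Finset.powersetCard w Finset.univ) := by
    intro x hx
    simp only [Finset.mem_filter, Finset.mem_univ, true_and] at hx
    refine Finset.mem_biUnion.mpr ⟨hammingNorm x, ?_, ?_⟩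
    · exact Finset.mem_range.mpr (Nat.lt_succ_of_le hx)
    · rw [Finset.mem_powersetCard]
      exact ⟨Finset.subset_univ _, rfl⟩
  calc (Finset.univ.filter (fun x : Fin n → ZMod 2 => hammingNorm x ≤ k)).card
      ≤ ((Finset.range (k+1)).biUnion (fun w => Finset.powersetCard w Finset.univ)).card :=
        Finset.card_le_card_of_injOn _ hmaps hinj
    _ ≤ ∑ w ∈ Finset.range (k+1), (Finset.powersetCard w (Finset.univ : Finset (Fin n))).card :=
        Finset.card_biUnion_le
    _ = cardSum n k := by
        unfold cardSum
        refine Finset.sum_congr rfl fun w _ => ?_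
        simp [Finset.card_powersetCard]

-- counting lemma 2
lemma card_fiber (n m : ℕ) (x : Fin n → ZMod 2) :
    (Finset.univ.filter
      (fun ab : Matrix (Fin m) (Fin n) (ZMod 2) × (Fin m → ZMod 2) => ab.1.mulVec x = ab.2)).card
      = Fintype.card (Matrix (Fin m) (Fin n) (ZMod 2)) := by
  classical
  rw [← Fintype.card_subtype]
  exact Fintype.card_congr
    { toFun := fun p => p.1.1
      invFun := fun A => ⟨(A, A.mulVec x), rfl⟩
      left_inv := by rintro ⟨⟨A, b⟩, h⟩; simp at h; simp [h]
      right_inv := fun A => rfl }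

lemma satProb_nonneg (n k m : ℕ) : 0 ≤ satProb n k m := by
  unfold satProb xorProb
  positivity

lemma unsat_eq (n k m : ℕ) : unsatProb n k m = 1 - satProb n k m := by
  classical
  unfold unsatProb satProb xorProb
  have hT : (0:ℝ) < (Fintype.card (Matrix (Fin m) (Fin n) (ZMod 2) × (Fin m → ZMod 2)) : ℝ) := by
    have := Fintype.card_pos (α := Matrix (Fin m) (Fin n) (ZMod 2) × (Fin m → ZMod 2))
    exact_mod_cast this
  have hsplit := Finset.card_filter_add_card_filter_not
    (s := (Finset.univ : Finset (Matrix (Fin m) (Fin n) (ZMod 2) × (Fin m → ZMod 2))))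
    (p := cardXorSat n k m)
  rw [Finset.card_univ] at hsplit
  have hprod : Fintype.card (Matrix (Fin m) (Fin n) (ZMod 2) × (Fin m → ZMod 2))
      = Fintype.card (Matrix (Fin m) (Fin n) (ZMod 2)) * 2 ^ m := by
    rw [Fintype.card_prod, Fintype.card_fun, ZMod.card]; simp [Fintype.card_fin]
  rw [hprod] at hsplit ⊢
  have h2 : (0:ℝ) < (Fintype.card (Matrix (Fin m) (Fin n) (ZMod 2)) : ℝ) * 2 ^ m := by
    have := Fintype.card_pos (α := Matrix (Fin m) (Fin n) (ZMod 2))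
    positivity
  field_simp
  rw [eq_sub_iff_add_eq, add_comm]
  norm_cast
  convert hsplit using 4

lemma satProb_le (n k m : ℕ) :
    satProb n k m ≤ (cardSum n k : ℝ) / 2 ^ m := by
  classical
  set M := Fintype.card (Matrix (Fin m) (Fin n) (ZMod 2)) with hM
  have hMpos : 0 < M := Fintype.card_pos
  -- numerator bound
  have hsub : (Finset.univ.filter (cardXorSat n k m)) ⊆
      (Finset.univ.filter (fun x : Fin n → ZMod 2 => hammingNorm x ≤ k)).biUnion
        (fun x => Finset.univ.filter
          (fun ab : Matrix (Fin m) (Fin n) (ZMod 2) × (Fin m → ZMod 2) => ab.1.mulVec x = ab.2)) := by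
    intro ab hab
    simp only [Finset.mem_filter, Finset.mem_univ, true_and] at hab
    obtain ⟨x, hx1, hx2⟩ := hab
    exact Finset.mem_biUnion.mpr ⟨x, by simp [hx1], by simp [hx2]⟩
  have hnum : (Finset.univ.filter (cardXorSat n k m)).card ≤ cardSum n k * M := by
    calc (Finset.univ.filter (cardXorSat n k m)).card
        ≤ ∑ x ∈ Finset.univ.filter (fun x : Fin n → ZMod 2 => hammingNorm x ≤ k),
            (Finset.univ.filter
              (fun ab : Matrix (Fin m) (Fin n) (ZMod 2) × (Fin m → ZMod 2) =>
                ab.1.mulVec x = ab.2)).card :=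
          le_trans (Finset.card_le_card hsub) Finset.card_biUnion_le
      _ = (Finset.univ.filter (fun x : Fin n → ZMod 2 => hammingNorm x ≤ k)).card * M := by
          rw [Finset.sum_congr rfl (fun x _ => card_fiber n m x), Finset.sum_const, smul_eq_mul]
      _ ≤ cardSum n k * M := Nat.mul_le_mul_right M (card_weight_le n k)
  unfold satProb xorProb
  have hcardP : Fintype.card (Matrix (Fin m) (Fin n) (ZMod 2) × (Fin m → ZMod 2))
      = M * 2 ^ m := by
    rw [Fintype.card_prod, Fintype.card_fun, ZMod.card]
    simp [Fintype.card_fin, hM]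
  rw [hcardP]
  rw [div_le_div_iff₀ (by positivity) (by positivity)]
  push_cast
  calc ((Finset.univ.filter (cardXorSat n k m)).card : ℝ) * 2 ^ m
      ≤ ((cardSum n k : ℝ) * M) * 2 ^ m := by
        have : ((Finset.univ.filter (cardXorSat n k m)).card : ℝ) ≤ (cardSum n k : ℝ) * M := by
          exact_mod_cast hnum
        nlinarith [pow_pos (by norm_num : (0:ℝ) < 2) m]
    _ = (cardSum n k : ℝ) * ((M : ℝ) * 2 ^ m) := by ring

lemma cardSum_le_two_pow (n k : ℕ) : cardSum n k ≤ 2 ^ n := by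
  unfold cardSum
  calc ∑ w ∈ Finset.range (k + 1), n.choose w
      ≤ ∑ w ∈ Finset.range (k + n + 1), n.choose w :=
        Finset.sum_le_sum_of_subset (Finset.range_subset_range.mpr (by omega))
    _ = ∑ w ∈ Finset.range (n + 1), n.choose w := by
        refine (Finset.sum_subset (Finset.range_subset_range.mpr (by omega)) ?_).symm
        intro i _ hi
        exact Nat.choose_eq_zero_of_lt (by simp at hi ⊢; omega)
    _ = 2 ^ n := Nat.sum_range_choose n

lemma cardSum_le_entropy (ρ : ℝ) (hρ0 : 0 < ρ) (hρ : ρ ≤ 1/2) (n : ℕ) :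
    (cardSum n ⌊ρ * n⌋₊ : ℝ) ≤ (2:ℝ) ^ (binEnt ρ * n) := by
  set k := ⌊ρ * n⌋₊ with hk
  have hρn : (0:ℝ) ≤ ρ * n := by positivity
  have hkρn : (k : ℝ) ≤ ρ * n := Nat.floor_le hρn
  have hq0 : (0:ℝ) < 1 - ρ := by linarith
  have hρq : ρ ≤ 1 - ρ := by linarith
  have hkn : (k : ℝ) ≤ (n : ℝ) := by
    have : ρ * n ≤ n := by nlinarith [Nat.cast_nonneg (α := ℝ) n]
    linarith
  have hknn : k ≤ n := by exact_mod_cast hkn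
  -- 2 ^ (-(binEnt ρ) * n) = ρ ^ (ρ n) * (1-ρ) ^ ((1-ρ) n)  (rpow)
  have h2 : (1:ℝ) < 2 := one_lt_two
  have key : (2:ℝ) ^ (-(binEnt ρ * n)) = ρ ^ (ρ * n) * (1 - ρ) ^ ((1 - ρ) * n) := by
    have e1 : (2:ℝ) ^ (Real.logb 2 ρ * (ρ * n)) = ρ ^ (ρ * n) := by
      rw [Real.rpow_mul (by norm_num), Real.rpow_logb (by norm_num) (by norm_num) hρ0]
    have e2 : (2:ℝ) ^ (Real.logb 2 (1 - ρ) * ((1 - ρ) * n)) = (1 - ρ) ^ ((1 - ρ) * n) := by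
      rw [Real.rpow_mul (by norm_num), Real.rpow_logb (by norm_num) (by norm_num) hq0]
    rw [← e1, ← e2, ← Real.rpow_add (by norm_num)]
    congr 1
    unfold binEnt
    ring
  have hsplitq : (1 - ρ) ^ ((1 - ρ) * n) = (1 - ρ) ^ ((n:ℝ)) / (1 - ρ) ^ (ρ * n) := by
    rw [← Real.rpow_sub hq0]
    congr 1
    ring
  -- term lower bound
  have hterm : ∀ w : ℕ, w ≤ k →
      (2:ℝ) ^ (-(binEnt ρ * n)) ≤ ρ ^ w * (1 - ρ) ^ (n - w) := by
    intro w hw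
    have hwn : w ≤ n := le_trans hw hknn
    have hwr : (w : ℝ) ≤ ρ * n := le_trans (by exact_mod_cast hw) hkρn
    have hratio0 : (0:ℝ) < ρ / (1 - ρ) := by positivity
    have hratio1 : ρ / (1 - ρ) ≤ 1 := by
      rw [div_le_one hq0]; exact hρq
    have lhs_eq : (2:ℝ) ^ (-(binEnt ρ * n)) = (1 - ρ) ^ ((n:ℝ)) * (ρ / (1 - ρ)) ^ (ρ * n) := by
      rw [key, Real.div_rpow hρ0.le hq0.le, hsplitq]
      field_simp
    have rhs_eq : (ρ:ℝ) ^ w * (1 - ρ) ^ (n - w)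
        = (1 - ρ) ^ ((n:ℝ)) * (ρ / (1 - ρ)) ^ ((w:ℝ)) := by
      rw [← Real.rpow_natCast ρ w, ← Real.rpow_natCast (1-ρ) (n-w),
        Nat.cast_sub hwn, Real.div_rpow hρ0.le hq0.le, Real.rpow_sub hq0]
      field_simp
    rw [lhs_eq, rhs_eq]
    have := Real.rpow_le_rpow_of_exponent_ge hratio0 hratio1 hwr
    have hbase : (0:ℝ) ≤ (1 - ρ) ^ ((n:ℝ)) := (Real.rpow_pos_of_pos hq0 _).le
    exact mul_le_mul_of_nonneg_left this hbase
  -- sum up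
  have hsum : (cardSum n k : ℝ) * (2:ℝ) ^ (-(binEnt ρ * n)) ≤ 1 := by
    have hbin : ((ρ + (1 - ρ)) : ℝ) ^ n
        = ∑ w ∈ Finset.range (n+1), ρ ^ w * (1 - ρ) ^ (n - w) * (n.choose w : ℝ) :=
      add_pow ρ (1-ρ) n
    have step1 : (cardSum n k : ℝ) * (2:ℝ) ^ (-(binEnt ρ * n))
        ≤ ∑ w ∈ Finset.range (k+1), ρ ^ w * (1 - ρ) ^ (n - w) * (n.choose w : ℝ) := by
      unfold cardSum
      push_cast
      rw [Finset.sum_mul]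
      refine Finset.sum_le_sum fun w hw => ?_
      have hwk : w ≤ k := by simp at hw; omega
      have := hterm w hwk
      have hc : (0:ℝ) ≤ (n.choose w : ℝ) := Nat.cast_nonneg _
      calc (n.choose w : ℝ) * (2:ℝ) ^ (-(binEnt ρ * n))
          ≤ (n.choose w : ℝ) * (ρ ^ w * (1 - ρ) ^ (n - w)) :=
            mul_le_mul_of_nonneg_left this hc
        _ = ρ ^ w * (1 - ρ) ^ (n - w) * (n.choose w : ℝ) := by ring
    have step2 : ∑ w ∈ Finset.range (k+1), ρ ^ w * (1 - ρ) ^ (n - w) * (n.choose w : ℝ)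
        ≤ ∑ w ∈ Finset.range (n+1), ρ ^ w * (1 - ρ) ^ (n - w) * (n.choose w : ℝ) := by
      refine Finset.sum_le_sum_of_subset_of_nonneg
        (Finset.range_subset_range.mpr (by omega)) fun w _ _ => ?_
      have h1 : (0:ℝ) ≤ ρ ^ w := pow_nonneg hρ0.le _
      have h2 : (0:ℝ) ≤ (1 - ρ) ^ (n - w) := pow_nonneg hq0.le _
      positivity
    have : ((ρ + (1 - ρ)) : ℝ) ^ n = 1 := by norm_num
    linarith [step1, step2, hbin ▸ this ▸ le_refl (1:ℝ)]
  -- conclude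
  have hpos : (0:ℝ) < (2:ℝ) ^ (binEnt ρ * n) := Real.rpow_pos_of_pos (by norm_num) _
  rw [Real.rpow_neg (by norm_num)] at hsum
  calc (cardSum n k : ℝ) = (cardSum n k : ℝ) * ((2:ℝ) ^ (binEnt ρ * n))⁻¹ * (2:ℝ) ^ (binEnt ρ * n) := by
        field_simp
    _ ≤ 1 * (2:ℝ) ^ (binEnt ρ * n) := mul_le_mul_of_nonneg_right hsum hpos.le
    _ = (2:ℝ) ^ (binEnt ρ * n) := one_mul _

theorem stmt9 (ρ : ℝ) (hρ0 : 0 < ρ) (hρ1 : ρ < 1) (s : ℝ)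
    (hs : (if ρ ≤ 1 / 2 then binEnt ρ else 1) < s) :
    Tendsto (fun n : ℕ => unsatProb n ⌊ρ * n⌋₊ ⌈s * n⌉₊) atTop (nhds 1) := by
  set c : ℝ := if ρ ≤ 1 / 2 then binEnt ρ else 1 with hc
  -- cardSum bound by 2 ^ (c * n) in both cases
  have hcard : ∀ n : ℕ, (cardSum n ⌊ρ * n⌋₊ : ℝ) ≤ (2:ℝ) ^ (c * n) := by
    intro n
    by_cases h : ρ ≤ 1 / 2
    · simp only [hc, if_pos h]
      exact cardSum_le_entropy ρ hρ0 h n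
    · simp only [hc, if_neg h]
      calc (cardSum n ⌊ρ * n⌋₊ : ℝ) ≤ ((2:ℕ) ^ n : ℝ) := by
            exact_mod_cast cardSum_le_two_pow n _
        _ = (2:ℝ) ^ (1 * (n:ℝ)) := by
            rw [one_mul, Real.rpow_natCast]; push_cast; ring
  -- satProb bound
  have hsat : ∀ n : ℕ, satProb n ⌊ρ * n⌋₊ ⌈s * n⌉₊ ≤ ((2:ℝ) ^ (c - s)) ^ n := by
    intro n
    have h2m : (2:ℝ) ^ (s * n) ≤ (2:ℝ) ^ ((⌈s * n⌉₊ : ℕ) : ℝ) :=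
      Real.rpow_le_rpow_of_exponent_le one_le_two (Nat.le_ceil _)
    have h2m' : (2:ℝ) ^ (s * n) ≤ 2 ^ (⌈s * n⌉₊ : ℕ) := by
      rw [← Real.rpow_natCast 2 ⌈s * n⌉₊]; exact h2m
    have hb : satProb n ⌊ρ * n⌋₊ ⌈s * n⌉₊ ≤ (2:ℝ) ^ (c * n) / (2:ℝ) ^ (s * n) := by
      calc satProb n ⌊ρ * n⌋₊ ⌈s * n⌉₊ ≤ (cardSum n ⌊ρ * n⌋₊ : ℝ) / 2 ^ (⌈s * n⌉₊ : ℕ) :=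
            satProb_le _ _ _
        _ ≤ (2:ℝ) ^ (c * n) / (2:ℝ) ^ (s * n) := by
            apply div_le_div₀ (by positivity) (hcard n) (by positivity) h2m'
    calc satProb n ⌊ρ * n⌋₊ ⌈s * n⌉₊ ≤ (2:ℝ) ^ (c * n) / (2:ℝ) ^ (s * n) := hb
      _ = ((2:ℝ) ^ (c - s)) ^ n := by
          rw [← Real.rpow_natCast ((2:ℝ) ^ (c - s)) n, ← Real.rpow_mul (by norm_num)]
          rw [← Real.rpow_sub (by norm_num)]
          congr 1
          ring
  -- geometric decay
  have hlt1 : (2:ℝ) ^ (c - s) < 1 :=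
    Real.rpow_lt_one_of_one_lt_of_neg one_lt_two (by linarith [hs])
  have hge0 : (0:ℝ) ≤ (2:ℝ) ^ (c - s) := (Real.rpow_pos_of_pos (by norm_num) _).le
  have hsat0 : Tendsto (fun n : ℕ => satProb n ⌊ρ * n⌋₊ ⌈s * n⌉₊) atTop (nhds 0) := by
    refine tendsto_of_tendsto_of_tendsto_of_le_of_le tendsto_const_nhds
      (tendsto_pow_atTop_nhds_zero_of_lt_one hge0 hlt1)
      (fun n => satProb_nonneg _ _ _) hsat
  have : Tendsto (fun n : ℕ => 1 - satProb n ⌊ρ * n⌋₊ ⌈s * n⌉₊) atTop (nhds (1 - 0)) :=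
    Tendsto.const_sub 1 hsat0
  simp only [sub_zero] at this
  refine this.congr fun n => (unsat_eq _ _ _).symm
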